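/- arXiv:1804.00947 — 4 statements merged into one kernel-verified Lean document; each statement's English description precedes it below -/
import Mathlib

section
/- For the requestor-wins transactional conflict problem with conflict chain of size k ≥ 2 and abort cost B > 0, the deterministic strategy that aborts after x = B/(k-1) time steps achieves, for every adversarial choice D > 0, cost at most (2 + 1/(k-1)) times the offline optimum min((k-1)D, B). That is, for x = B/(k-1) and D ≥ x, (k·x + B)/min((k-1)x, B) = 2 + 1/(k-1). -/
theorem stmt_0 (k : ℕ) (hk : 2 ≤ k) (B D : ℝ) (hB : 0 < B) (hD : 0 < D) :
    (let x : ℝ := B / ((k : ℝ) - 1)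
     (if D ≤ x then ((k : ℝ) - 1) * D else (k : ℝ) * x + B) ≤
       (2 + 1 / ((k : ℝ) - 1)) * min (((k : ℝ) - 1) * D) B) ∧
    (B / ((k : ℝ) - 1) ≤ D →
      ((k : ℝ) * (B / ((k : ℝ) - 1)) + B) /
          min (((k : ℝ) - 1) * (B / ((k : ℝ) - 1))) B = 2 + 1 / ((k : ℝ) - 1)) := by
  have hk1 : (1 : ℝ) < (k : ℝ) := by exact_mod_cast Nat.lt_of_lt_of_le one_lt_two hk
  have hkm : (0 : ℝ) < (k : ℝ) - 1 := by linarith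
  have hne : ((k : ℝ) - 1) ≠ 0 := ne_of_gt hkm
  have hxB : ((k : ℝ) - 1) * (B / ((k : ℝ) - 1)) = B := by field_simp
  constructor
  · intro x
    by_cases h : D ≤ x
    · rw [if_pos h]
      have hmin : min (((k : ℝ) - 1) * D) B = ((k : ℝ) - 1) * D := by
        apply min_eq_left
        calc ((k : ℝ) - 1) * D ≤ ((k : ℝ) - 1) * x := by nlinarith
          _ = B := hxB
      rw [hmin]
      nlinarith [mul_pos hkm hD, one_div_pos.mpr hkm]
    · rw [if_neg h]
      push_neg at h
      have hmin : min (((k : ℝ) - 1) * D) B = B := by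
        apply min_eq_right
        calc B = ((k : ℝ) - 1) * x := hxB.symm
          _ ≤ ((k : ℝ) - 1) * D := by nlinarith
      rw [hmin]
      have : (k : ℝ) * x = B + x := by
        show (k : ℝ) * (B / ((k:ℝ)-1)) = B + B / ((k:ℝ)-1)
        field_simp; ring
      rw [this]
      have hx : x = B / ((k : ℝ) - 1) := rfl
      rw [hx]
      rw [div_eq_mul_inv, one_div]
      nlinarith [mul_pos hB (inv_pos.mpr hkm)]
  · intro _
    rw [hxB, min_self]
    field_simp
    ring
end

section
/- For the requestor-wins problem with k = 2 and abort cost B > 0, the uniform strategy p(x) = 1/B on [0, B] is 2-competitive: for every adversarial value y ∈ (0, B], the expected cost Cost(p, y) = ∫₀^y (2x + B)·(1/B) dx + y·∫_y^B (1/B) dx satisfies Cost(p, y) ≤ 2·min(y, B) = 2y; moreover the cost in the case y > B, namely ∫₀^B (2x + B)·(1/B) dx, equals 2B = 2·min(y, B). -/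
lemma aux_int (B a b : ℝ) (hB : B ≠ 0) :
    (∫ x in a..b, (2 * x + B) * (1 / B)) = (b ^ 2 - a ^ 2 + B * (b - a)) / B := by
  have : (∫ x in a..b, (2 * x + B) * (1 / B))
      = (∫ x in a..b, (2 * x + B)) * (1 / B) := by
    rw [intervalIntegral.integral_mul_const]
  rw [this]
  have h1 : (∫ x in a..b, (2 * x + B)) = (b ^ 2 - a ^ 2) + B * (b - a) := by
    rw [intervalIntegral.integral_add
        ((intervalIntegral.intervalIntegrable_id (μ := MeasureTheory.volume)).const_mul 2)
        (intervalIntegrable_const (c := B)),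
      intervalIntegral.integral_const_mul, integral_id, intervalIntegral.integral_const]
    simp only [smul_eq_mul]
    ring
  rw [h1]; field_simp

theorem stmt_3 (B : ℝ) (hB : 0 < B) :
    (∀ y : ℝ, 0 < y → y ≤ B →
      (∫ x in (0 : ℝ)..y, (2 * x + B) * (1 / B)) + y * ∫ x in y..B, (1 : ℝ) / B ≤
        2 * min y B) ∧
    (∫ x in (0 : ℝ)..B, (2 * x + B) * (1 / B)) = 2 * B := by
  have hB' := hB.ne'
  constructor
  · intro y hy hyB
    rw [aux_int B 0 y hB', min_eq_left hyB, intervalIntegral.integral_const]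
    simp only [smul_eq_mul]
    have : (y ^ 2 - 0 ^ 2 + B * (y - 0)) / B + y * ((B - y) * (1 / B)) = 2 * y := by
      field_simp; ring
    rw [this]
  · rw [aux_int B 0 B hB']; field_simp; ring
end

section
/- Let B > 0. Define Cost(p, y) = ∫₀^y (2x + B)·p(x) dx + y·∫_y^B p(x) dx for the uniform density p(x) = 1/B on [0, B]. Then for every y ∈ (0, B], Cost(p, y)/y = 2 exactly; i.e., the expected cost of the uniform strategy equals exactly twice the offline optimum for every adversarial choice y ≤ B. -/
theorem stmt_4 (B : ℝ) (hB : 0 < B) (y : ℝ) (hy : 0 < y) (hyB : y ≤ B) :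
    ((∫ x in (0 : ℝ)..y, (2 * x + B) * (1 / B)) + y * ∫ x in y..B, (1 : ℝ) / B) / y = 2 := by
  have h1 : (∫ x in (0 : ℝ)..y, (2 * x + B) * (1 / B)) = (y ^ 2 + B * y) * (1 / B) := by
    rw [intervalIntegral.integral_mul_const]
    congr 1
    rw [intervalIntegral.integral_add ((by continuity : Continuous fun x : ℝ => 2 * x).intervalIntegrable _ _)
      intervalIntegrable_const, intervalIntegral.integral_const_mul]
    simp [integral_id]
    ring
  have h2 : (∫ x in y..B, (1 : ℝ) / B) = (B - y) * (1 / B) := by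
    simp [mul_comm]
  rw [h1, h2]
  field_simp
  ring
end

section
/- Let k ≥ 2 be an integer and B > 0, y > 0 reals. For the density p(x) = (k−1)/B on [0, B/(k−1)], if y ≤ B/(k−1) then ∫₀^y (kx + B)·p(x) dx + (k−1)·∫_y^{B/(k−1)} y·p(x) dx ≤ 2·(k−1)·y; i.e., the uniform strategy on [0, B/(k−1)] is 2-competitive for the requestor-wins problem with conflict chains of size k. -/
/-! The expected cost of the uniform strategy evaluates in closed form to
`2 (k - 1) y - (k - 1) (k - 2) y² / (2 B)`, and the correction term is nonnegative once `k ≥ 2`. -/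

open intervalIntegral

theorem integral_linear_mul_const (a b c y : ℝ) :
    ∫ x in (0 : ℝ)..y, (a * x + b) * c = (a * y ^ 2 / 2 + b * y) * c := by
  rw [integral_mul_const, integral_add ((continuous_const_mul a).intervalIntegrable _ _)
    intervalIntegrable_const, integral_const_mul, integral_id, integral_const, smul_eq_mul]
  ring

theorem uniform_requestorWins_cost_eq (κ B y : ℝ) (hκ : κ ≠ 1) (hB : B ≠ 0) :
    (∫ x in (0 : ℝ)..y, (κ * x + B) * ((κ - 1) / B)) +
        (κ - 1) * ∫ _ in y..(B / (κ - 1)), y * ((κ - 1) / B) =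
      2 * (κ - 1) * y - (κ - 1) * (κ - 2) * y ^ 2 / (2 * B) := by
  have hκ' : κ - 1 ≠ 0 := sub_ne_zero.mpr hκ
  rw [integral_linear_mul_const, integral_const, smul_eq_mul]
  field_simp
  ring

theorem stmt_13_general (k : ℕ) (hk : 2 ≤ k) (B y : ℝ) (hB : 0 < B) :
    (∫ x in (0 : ℝ)..y, ((k : ℝ) * x + B) * (((k : ℝ) - 1) / B)) +
      ((k : ℝ) - 1) * ∫ x in y..(B / ((k : ℝ) - 1)), y * (((k : ℝ) - 1) / B) ≤
    2 * ((k : ℝ) - 1) * y := by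
  have hk2 : (2 : ℝ) ≤ k := by exact_mod_cast hk
  rw [uniform_requestorWins_cost_eq _ B y (by linarith) hB.ne']
  have hcorrection : 0 ≤ ((k : ℝ) - 1) * ((k : ℝ) - 2) * y ^ 2 / (2 * B) := by
    have : 0 ≤ ((k : ℝ) - 1) * ((k : ℝ) - 2) := mul_nonneg (by linarith) (by linarith)
    positivity
  linarith

theorem stmt_13 (k : ℕ) (hk : 2 ≤ k) (B y : ℝ) (hB : 0 < B) (hy : 0 < y)
    (hyB : y ≤ B / ((k : ℝ) - 1)) :
    (∫ x in (0 : ℝ)..y, ((k : ℝ) * x + B) * (((k : ℝ) - 1) / B)) +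
      ((k : ℝ) - 1) * ∫ x in y..(B / ((k : ℝ) - 1)), y * (((k : ℝ) - 1) / B) ≤
    2 * ((k : ℝ) - 1) * y :=
  stmt_13_general k hk B y hB
end
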